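/- arXiv:cond-mat/9811345 — 6 statements merged into one kernel-verified Lean document; each statement's English description precedes it below -/
import Mathlib

section
/- For a ferromagnetic q-state Potts model (all couplings J_{ij} ≥ 0) on a finite set of sites, the two-point correlation function satisfies ⟨(q δ_{σ_i,σ_j} − 1)/(q−1)⟩ ≥ 0 for all sites i, j. -/
open Finset

private lemma potts_key_sum_nonneg
    {V : Type*} [Fintype V] [DecidableEq V]
    (q : ℕ) (hq : 2 ≤ q) (i j : V) (A : Finset (V × V)) :
    0 ≤ ∑ σ : V → Fin q,
        (if ∀ p ∈ A, σ p.1 = σ p.2 then (1:ℝ) else 0) *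
          (((q : ℝ) * (if σ i = σ j then 1 else 0) - 1) / ((q : ℝ) - 1)) := by
  classical
  have hq2 : (2:ℝ) ≤ (q:ℝ) := by exact_mod_cast hq
  set R : V → V → Prop := fun x y => (x, y) ∈ A ∨ (y, x) ∈ A with hR
  set Conn : V → Prop := fun v => Relation.ReflTransGen R j v with hConn
  have hclosed : ∀ p ∈ A, (Conn p.1 ↔ Conn p.2) := by
    intro p hp
    constructor
    · intro h; exact h.tail (Or.inl (by simpa using hp))
    · intro h; exact h.tail (Or.inr (by simpa using hp))
  have hPconst : ∀ σ : V → Fin q, (∀ p ∈ A, σ p.1 = σ p.2) → ∀ v, Conn v → σ v = σ j := by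
    intro σ hP v hv
    induction hv with
    | refl => rfl
    | @tail b c hb hbc ih =>
      rcases hbc with h | h
      · exact (hP (b, c) h).symm.trans ih
      · exact (hP (c, b) h).trans ih
  by_cases hci : Conn i
  · apply Finset.sum_nonneg
    intro σ _
    by_cases hP : ∀ p ∈ A, σ p.1 = σ p.2
    · have hij : σ i = σ j := hPconst σ hP i hci
      rw [if_pos hP, if_pos hij, one_mul, mul_one]
      apply div_nonneg <;> linarith
    · rw [if_neg hP, zero_mul]
  · -- not connected: the sum is zero
    set P : (V → Fin q) → Prop := fun σ => ∀ p ∈ A, σ p.1 = σ p.2 with hPdef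
    set N : Fin q → Fin q → ℝ := fun c d =>
      ∑ σ : V → Fin q, if P σ ∧ σ i = c ∧ σ j = d then (1:ℝ) else 0 with hNdef
    have hNconst : ∀ c d d', N c d = N c d' := by
      intro c d d'
      set Φ : (V → Fin q) ≃ (V → Fin q) :=
        Function.Involutive.toPerm
          (fun σ v => if Conn v then Equiv.swap d d' (σ v) else σ v)
          (by
            intro σ; funext v
            by_cases h : Conn v <;> simp [h]) with hΦ
      have hΦapp : ∀ (σ : V → Fin q) (v : V),
          (Φ σ) v = if Conn v then Equiv.swap d d' (σ v) else σ v := fun σ v => rfl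
      have key : ∀ σ : V → Fin q,
          (if P (Φ σ) ∧ (Φ σ) i = c ∧ (Φ σ) j = d' then (1:ℝ) else 0)
            = if P σ ∧ σ i = c ∧ σ j = d then (1:ℝ) else 0 := by
        intro σ
        have hedge : ∀ p ∈ A, ((Φ σ) p.1 = (Φ σ) p.2 ↔ σ p.1 = σ p.2) := by
          intro p hp
          by_cases hc1 : Conn p.1
          · have hc2 : Conn p.2 := (hclosed p hp).1 hc1
            simp [hΦapp, hc1, hc2, Equiv.apply_eq_iff_eq]
          · have hc2 : ¬ Conn p.2 := fun h2 => hc1 ((hclosed p hp).2 h2)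
            simp [hΦapp, hc1, hc2]
        have h1 : P (Φ σ) ↔ P σ := by
          constructor <;> intro h p hp
          · exact (hedge p hp).1 (h p hp)
          · exact (hedge p hp).2 (h p hp)
        have h2 : (Φ σ) i = σ i := by rw [hΦapp, if_neg hci]
        have h3 : ((Φ σ) j = d') ↔ (σ j = d) := by
          rw [hΦapp, if_pos (Relation.ReflTransGen.refl)]
          constructor
          · intro h
            have := congrArg (Equiv.swap d d') h
            rwa [Equiv.swap_apply_self, Equiv.swap_apply_right] at this
          · intro h; rw [h, Equiv.swap_apply_left]
        simp only [h1, h2, h3]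
      calc N c d = ∑ σ : V → Fin q,
            (if P (Φ σ) ∧ (Φ σ) i = c ∧ (Φ σ) j = d' then (1:ℝ) else 0) := by
              rw [hNdef]; exact (Finset.sum_congr rfl fun σ _ => (key σ).symm)
        _ = N c d' := Equiv.sum_comp Φ
              (fun σ => if P σ ∧ σ i = c ∧ σ j = d' then (1:ℝ) else 0)
    -- pointwise decompositions
    have point1 : ∀ σ : V → Fin q, (if P σ then (1:ℝ) else 0)
        = ∑ c : Fin q, ∑ d : Fin q, (if P σ ∧ σ i = c ∧ σ j = d then (1:ℝ) else 0) := by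
      intro σ
      by_cases hP : P σ
      · rw [if_pos hP]
        rw [show (fun c => ∑ d : Fin q, if P σ ∧ σ i = c ∧ σ j = d then (1:ℝ) else 0)
            = fun c => ∑ d : Fin q, if σ i = c ∧ σ j = d then (1:ℝ) else 0 from
          funext fun c => Finset.sum_congr rfl fun d _ => by
            by_cases h : σ i = c ∧ σ j = d
            · rw [if_pos ⟨hP, h.1, h.2⟩, if_pos h]
            · rw [if_neg (fun hh => h ⟨hh.2.1, hh.2.2⟩), if_neg h]]
        simp [ite_and]
      · rw [if_neg hP]
        rw [eq_comm]
        apply Finset.sum_eq_zero; intro c _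
        apply Finset.sum_eq_zero; intro d _
        exact if_neg (fun h => hP h.1)
    have point2 : ∀ σ : V → Fin q, (if P σ ∧ σ i = σ j then (1:ℝ) else 0)
        = ∑ c : Fin q, (if P σ ∧ σ i = c ∧ σ j = c then (1:ℝ) else 0) := by
      intro σ
      by_cases hP : P σ
      · by_cases hij : σ i = σ j
        · rw [if_pos ⟨hP, hij⟩]
          rw [show (fun c => if P σ ∧ σ i = c ∧ σ j = c then (1:ℝ) else 0)
              = fun c => if σ i = c ∧ σ j = c then (1:ℝ) else 0 from funext fun c => by
            by_cases h : σ i = c ∧ σ j = c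
            · rw [if_pos ⟨hP, h.1, h.2⟩, if_pos h]
            · rw [if_neg (fun hh => h ⟨hh.2.1, hh.2.2⟩), if_neg h]]
          have hcc : ∀ c : Fin q, ((σ i = c ∧ σ j = c) ↔ (σ j = c)) := fun c =>
            ⟨fun h => h.2, fun h => ⟨hij.trans h, h⟩⟩
          simp only [hcc]
          rw [eq_comm, Finset.sum_ite_eq]
          simp
        · rw [if_neg (fun h : P σ ∧ σ i = σ j => hij h.2), eq_comm]
          apply Finset.sum_eq_zero
          intro c _
          rw [if_neg]
          rintro ⟨-, h1, h2⟩
          exact hij (h1.trans h2.symm)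
      · rw [if_neg (fun h : P σ ∧ σ i = σ j => hP h.1), eq_comm]
        apply Finset.sum_eq_zero
        intro c _
        exact if_neg (fun h => hP h.1)
    set M : ℝ := ∑ σ : V → Fin q, if P σ then (1:ℝ) else 0 with hMdef
    set D : ℝ := ∑ σ : V → Fin q, if P σ ∧ σ i = σ j then (1:ℝ) else 0 with hDdef
    have hM : M = ∑ c : Fin q, ∑ d : Fin q, N c d := by
      calc M = ∑ σ : V → Fin q, ∑ c : Fin q, ∑ d : Fin q,
              (if P σ ∧ σ i = c ∧ σ j = d then (1:ℝ) else 0) :=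
            Finset.sum_congr rfl fun σ _ => point1 σ
        _ = ∑ c : Fin q, ∑ σ : V → Fin q, ∑ d : Fin q,
              (if P σ ∧ σ i = c ∧ σ j = d then (1:ℝ) else 0) := Finset.sum_comm
        _ = ∑ c : Fin q, ∑ d : Fin q, N c d :=
            Finset.sum_congr rfl fun c _ => Finset.sum_comm
    have hD : D = ∑ c : Fin q, N c c := by
      calc D = ∑ σ : V → Fin q, ∑ c : Fin q,
              (if P σ ∧ σ i = c ∧ σ j = c then (1:ℝ) else 0) :=
            Finset.sum_congr rfl fun σ _ => point2 σ
        _ = ∑ c : Fin q, N c c := Finset.sum_comm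
    have hqD : (q:ℝ) * D = M := by
      rw [hD, hM]
      have : ∀ c : Fin q, ∑ d : Fin q, N c d = (q:ℝ) * N c c := by
        intro c
        rw [Finset.sum_congr rfl fun d _ => hNconst c d c]
        simp [Finset.sum_const, mul_comm]
      rw [Finset.sum_congr rfl fun c _ => this c, ← Finset.mul_sum]
    have hzero : ∑ σ : V → Fin q,
        (if ∀ p ∈ A, σ p.1 = σ p.2 then (1:ℝ) else 0) *
          (((q : ℝ) * (if σ i = σ j then 1 else 0) - 1) / ((q : ℝ) - 1)) = 0 := by
      have hpt : ∀ σ : V → Fin q,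
          (if ∀ p ∈ A, σ p.1 = σ p.2 then (1:ℝ) else 0) *
            (((q : ℝ) * (if σ i = σ j then 1 else 0) - 1) / ((q : ℝ) - 1))
          = ((q:ℝ) * (if P σ ∧ σ i = σ j then (1:ℝ) else 0)
              - (if P σ then (1:ℝ) else 0)) / ((q:ℝ) - 1) := by
        intro σ
        by_cases hP : ∀ p ∈ A, σ p.1 = σ p.2
        · have hP' : P σ := hP
          by_cases hij : σ i = σ j
          · rw [if_pos hP, if_pos hij, if_pos (⟨hP', hij⟩ : P σ ∧ σ i = σ j)]
            ring
          · rw [if_pos hP, if_neg hij,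
              if_neg (fun h : P σ ∧ σ i = σ j => hij h.2)]
            ring
        · have hP' : ¬ P σ := hP
          rw [if_neg hP, if_neg (fun h : P σ ∧ σ i = σ j => hP' h.1)]
          ring
      rw [Finset.sum_congr rfl fun σ _ => hpt σ]
      rw [← Finset.sum_div, Finset.sum_sub_distrib, ← Finset.mul_sum]
      rw [← hDdef, ← hMdef, hqD, sub_self, zero_div]
    exact le_of_eq hzero.symm

set_option maxHeartbeats 1000000 in
/-- Griffiths' first inequality for ferromagnetic Potts models:
for the Gibbs measure with Hamiltonian `H = −∑ J_{ij} δ_{σ_i,σ_j}`, `J_{ij} ≥ 0`,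
the two-point function satisfies `⟨(q δ_{σ_i,σ_j} − 1)/(q−1)⟩ ≥ 0`. -/
theorem potts_ferro_two_point_nonneg
    {V : Type*} [Fintype V] [DecidableEq V]
    (q : ℕ) (hq : 2 ≤ q) (J : V → V → ℝ)
    (hsymm : ∀ i j, J i j = J j i) (hferro : ∀ i j, 0 ≤ J i j)
    (i j : V) :
    0 ≤ (∑ σ : V → Fin q,
          Real.exp (∑ x : V, ∑ y : V, J x y * (if σ x = σ y then 1 else 0)) *
            (((q : ℝ) * (if σ i = σ j then 1 else 0) - 1) / ((q : ℝ) - 1)))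
        / (∑ σ : V → Fin q,
          Real.exp (∑ x : V, ∑ y : V, J x y * (if σ x = σ y then 1 else 0))) := by
    classical
  apply div_nonneg
  · -- numerator is nonnegative, via the FK (random-cluster) expansion
    have hexp : ∀ σ : V → Fin q,
        Real.exp (∑ x : V, ∑ y : V, J x y * (if σ x = σ y then 1 else 0))
          = ∑ A ∈ (Finset.univ : Finset (V × V)).powerset,
              (∏ p ∈ A, (Real.exp (J p.1 p.2) - 1)) *
                (if ∀ p ∈ A, σ p.1 = σ p.2 then (1:ℝ) else 0) := by
      intro σ
      rw [show (∑ x : V, ∑ y : V, J x y * (if σ x = σ y then (1:ℝ) else 0))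
          = ∑ p : V × V, J p.1 p.2 * (if σ p.1 = σ p.2 then (1:ℝ) else 0) from
        (Fintype.sum_prod_type
          (fun p : V × V => J p.1 p.2 * (if σ p.1 = σ p.2 then (1:ℝ) else 0))).symm]
      rw [Real.exp_sum]
      have h1 : ∀ p : V × V,
          Real.exp (J p.1 p.2 * (if σ p.1 = σ p.2 then 1 else 0))
            = (Real.exp (J p.1 p.2) - 1) * (if σ p.1 = σ p.2 then (1:ℝ) else 0) + 1 := by
        intro p
        by_cases h : σ p.1 = σ p.2 <;> simp [h]
      rw [Finset.prod_congr rfl fun p _ => h1 p, Finset.prod_add]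
      refine Finset.sum_congr rfl fun A hA => ?_
      rw [Finset.prod_const_one, mul_one, Finset.prod_mul_distrib, Finset.prod_boole]
      congr
    calc (0:ℝ) ≤ ∑ A ∈ (Finset.univ : Finset (V × V)).powerset,
            (∏ p ∈ A, (Real.exp (J p.1 p.2) - 1)) *
              ∑ σ : V → Fin q,
                (if ∀ p ∈ A, σ p.1 = σ p.2 then (1:ℝ) else 0) *
                  (((q : ℝ) * (if σ i = σ j then 1 else 0) - 1) / ((q : ℝ) - 1)) := by
          apply Finset.sum_nonneg
          intro A _
          refine mul_nonneg (Finset.prod_nonneg fun p _ => ?_)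
            (potts_key_sum_nonneg q hq i j A)
          have := Real.one_le_exp (hferro p.1 p.2)
          linarith
      _ = ∑ A ∈ (Finset.univ : Finset (V × V)).powerset,
            ∑ σ : V → Fin q,
              ((∏ p ∈ A, (Real.exp (J p.1 p.2) - 1)) *
                  (if ∀ p ∈ A, σ p.1 = σ p.2 then (1:ℝ) else 0)) *
                (((q : ℝ) * (if σ i = σ j then 1 else 0) - 1) / ((q : ℝ) - 1)) := by
          refine Finset.sum_congr rfl fun A _ => ?_
          rw [Finset.mul_sum]
          exact Finset.sum_congr rfl fun σ _ => (mul_assoc _ _ _).symm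
      _ = ∑ σ : V → Fin q,
            ∑ A ∈ (Finset.univ : Finset (V × V)).powerset,
              ((∏ p ∈ A, (Real.exp (J p.1 p.2) - 1)) *
                  (if ∀ p ∈ A, σ p.1 = σ p.2 then (1:ℝ) else 0)) *
                (((q : ℝ) * (if σ i = σ j then 1 else 0) - 1) / ((q : ℝ) - 1)) :=
          Finset.sum_comm
      _ = ∑ σ : V → Fin q,
            Real.exp (∑ x : V, ∑ y : V, J x y * (if σ x = σ y then 1 else 0)) *
              (((q : ℝ) * (if σ i = σ j then 1 else 0) - 1) / ((q : ℝ) - 1)) := by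
          refine Finset.sum_congr rfl fun σ _ => ?_
          rw [hexp σ, Finset.sum_mul]
  · exact Finset.sum_nonneg fun σ _ => (Real.exp_pos _).le
end

section
/- For a q-state Potts model on a bipartite site set V = A ∪ B with couplings satisfying J_{ij} ≥ 0 for i,j both in A or both in B, and J_{ij} ≤ 0 for i ∈ A, j ∈ B, the two-point correlation G(i,j) = ⟨(q δ_{σ_i,σ_j} − 1)/(q−1)⟩ satisfies G(i,j) ≥ 0 when i,j lie in the same class (both in A or both in B), and G(i,j) ≤ 0 when i,j lie in opposite classes. -/
/-!
With `ε_ab(c) = [c = a] - [c = b]` one has `q δ(s,t) - 1 = ½ ∑_{a,b} ε_ab(s) ε_ab(t)`, so it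
suffices to treat `⟨ε_ab(σ_i) ε_ab(σ_j)⟩` for fixed colours `a ≠ b`. Averaging over the swaps
`a ↔ b` made independently at each site, the sites coloured `a` or `b` carry an Ising model with
couplings `J/2` and spin `ε_ab`, while the remaining sites only contribute a constant factor.
Flipping the spins off `A` makes every coupling nonnegative, and Griffiths' first inequality
(expand `exp (K s s') = cosh K + sinh K s s'` edge by edge; every spin monomial has a nonnegative
sum) then gives the sign.
-/

open Finset

namespace Potts

noncomputable def spin (b : Bool) : ℝ := if b then -1 else 1

lemma spin_xor (a b : Bool) : spin (xor a b) = spin a * spin b := by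
  cases a <;> cases b <;> norm_num [spin]

lemma spin_mul_self (b : Bool) : spin b * spin b = 1 := by
  cases b <;> norm_num [spin]

lemma sum_spin_pow_nonneg (n : ℕ) : 0 ≤ ∑ b : Bool, spin b ^ n := by
  rcases Nat.even_or_odd n with h | h <;> simp [spin, h.neg_one_pow]

lemma exp_mul_spin_mul_spin (K : ℝ) (a b : Bool) :
    Real.exp (K * (spin a * spin b)) = Real.cosh K + Real.sinh K * (spin a * spin b) := by
  cases a <;> cases b <;> simp [spin, ← Real.cosh_add_sinh]

section Ising

variable {V : Type*}

def xorPerm (u : V → Bool) : Equiv.Perm (V → Bool) :=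
  Function.Involutive.toPerm (fun t x => xor (u x) (t x)) fun t => by simp

lemma xorPerm_apply (u t : V → Bool) (x : V) : xorPerm u t x = xor (u x) (t x) := rfl

variable [Fintype V] [DecidableEq V]

lemma sum_prod_spin_pow_nonneg (m : V → ℕ) : 0 ≤ ∑ t : V → Bool, ∏ x, spin (t x) ^ m x := by
  rw [← Fintype.prod_sum fun x b => spin b ^ m x]
  exact prod_nonneg fun x _ => sum_spin_pow_nonneg (m x)

lemma spin_mul_prod_spin_pow (t : V → Bool) (m : V → ℕ) (z : V) :
    spin (t z) * ∏ x, spin (t x) ^ m x = ∏ x, spin (t x) ^ (m + Pi.single z 1 : V → ℕ) x := by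
  simp only [Pi.add_apply, pow_add, prod_mul_distrib, Pi.single_apply, pow_ite, pow_one, pow_zero,
    prod_ite_eq', mem_univ, if_true, mul_comm]

def HasNonnegSpinMoments (f : (V → Bool) → ℝ) : Prop :=
  ∀ m : V → ℕ, 0 ≤ ∑ t, f t * ∏ x, spin (t x) ^ m x

lemma HasNonnegSpinMoments.mul_exp {f : (V → Bool) → ℝ} (hf : HasNonnegSpinMoments f)
    {K : ℝ} (hK : 0 ≤ K) (x y : V) :
    HasNonnegSpinMoments fun t => f t * Real.exp (K * (spin (t x) * spin (t y))) := by
  intro m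
  have hsplit : ∀ t : V → Bool,
      f t * Real.exp (K * (spin (t x) * spin (t y))) * ∏ z, spin (t z) ^ m z =
        Real.cosh K * (f t * ∏ z, spin (t z) ^ m z) +
          Real.sinh K *
            (f t * ∏ z, spin (t z) ^ (m + Pi.single y 1 + Pi.single x 1 : V → ℕ) z) := by
    intro t
    rw [exp_mul_spin_mul_spin, ← spin_mul_prod_spin_pow, ← spin_mul_prod_spin_pow]
    ring
  simp only [hsplit, sum_add_distrib, ← mul_sum]
  exact add_nonneg (mul_nonneg (Real.cosh_pos K).le (hf _))
    (mul_nonneg (Real.sinh_nonneg_iff.mpr hK) (hf _))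

lemma hasNonnegSpinMoments_prod_exp (K : V × V → ℝ) (P : Finset (V × V))
    (hK : ∀ p ∈ P, 0 ≤ K p) :
    HasNonnegSpinMoments fun t => ∏ p ∈ P, Real.exp (K p * (spin (t p.1) * spin (t p.2))) := by
  induction P using Finset.induction_on with
  | empty => simpa [HasNonnegSpinMoments] using sum_prod_spin_pow_nonneg
  | insert p P hp ih =>
    simp_rw [prod_insert hp, mul_comm (Real.exp _)]
    exact (ih fun p' hp' => hK p' (mem_insert_of_mem hp')).mul_exp (hK p (mem_insert_self p P)) _ _

theorem ising_two_point_nonneg (K : V → V → ℝ) (hK : ∀ x y, 0 ≤ K x y) (i j : V) :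
    0 ≤ ∑ t : V → Bool,
      Real.exp (∑ x, ∑ y, K x y * (spin (t x) * spin (t y))) * (spin (t i) * spin (t j)) := by
  have h := hasNonnegSpinMoments_prod_exp (fun p => K p.1 p.2) univ (fun p _ => hK p.1 p.2)
    (0 + Pi.single j 1 + Pi.single i 1)
  convert h using 2 with t
  rw [← Fintype.sum_prod_type', Real.exp_sum, ← spin_mul_prod_spin_pow, ← spin_mul_prod_spin_pow]
  simp

theorem ising_two_point_gauge_nonneg (K : V → V → ℝ) (g : V → Bool)
    (hK : ∀ x y, 0 ≤ spin (g x) * spin (g y) * K x y) (i j : V) :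
    0 ≤ spin (g i) * spin (g j) * ∑ t : V → Bool,
      Real.exp (∑ x, ∑ y, K x y * (spin (t x) * spin (t y))) * (spin (t i) * spin (t j)) := by
  rw [← Equiv.sum_comp (xorPerm g), mul_sum]
  convert ising_two_point_nonneg _ hK i j using 2 with t
  simp only [xorPerm_apply, spin_xor]
  have hE : ∑ x, ∑ y, K x y * (spin (g x) * spin (t x) * (spin (g y) * spin (t y))) =
      ∑ x, ∑ y, spin (g x) * spin (g y) * K x y * (spin (t x) * spin (t y)) :=
    sum_congr rfl fun x _ => sum_congr rfl fun y _ => by ring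
  rw [hE]
  set E := Real.exp (∑ x, ∑ y, spin (g x) * spin (g y) * K x y * (spin (t x) * spin (t y)))
  linear_combination E * spin (t i) * spin (t j) *
    (spin (g j) * spin (g j) * spin_mul_self (g i) + spin_mul_self (g j))

end Ising

section Recoloring

variable {V α : Type*} [DecidableEq α]

noncomputable def colorDiff (a b c : α) : ℝ := (if c = a then 1 else 0) - if c = b then 1 else 0

def swapColorsOn (a b : α) (η : V → Bool) (σ : V → α) : V → α :=
  fun x => if η x then Equiv.swap a b (σ x) else σ x

def recolorPair (a b : α) (σ : V → α) (t : V → Bool) : V → α :=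
  fun x => if σ x = a ∨ σ x = b then (if t x then b else a) else σ x

noncomputable def pairCoupling (a b : α) (σ : V → α) (J : V → V → ℝ) (x y : V) : ℝ :=
  if (σ x = a ∨ σ x = b) ∧ (σ y = a ∨ σ y = b) then J x y / 2 else 0

lemma swapColorsOn_involutive (a b : α) (η : V → Bool) :
    Function.Involutive (swapColorsOn a b η) := fun σ => by
  funext x
  by_cases hx : η x <;> simp [swapColorsOn, hx]

lemma swapColorsOn_eq_recolorPair {a b : α} (hab : a ≠ b) (η : V → Bool) (σ : V → α) :
    swapColorsOn a b η σ = recolorPair a b σ (xorPerm (fun x => decide (σ x = b)) η) := by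
  funext x
  by_cases ha : σ x = a
  · cases hx : η x <;> simp [swapColorsOn, recolorPair, xorPerm_apply, hx, ha, hab]
  by_cases hb : σ x = b
  · cases hx : η x <;> simp [swapColorsOn, recolorPair, xorPerm_apply, hx, hb]
  · cases hx : η x <;> simp [swapColorsOn, recolorPair, hx, ha, hb, Equiv.swap_apply_of_ne_of_ne]

lemma colorDiff_recolorPair {a b : α} (hab : a ≠ b) (σ : V → α) (t : V → Bool) (x : V) :
    colorDiff a b (recolorPair a b σ t x) = if σ x = a ∨ σ x = b then spin (t x) else 0 := by
  by_cases hx : σ x = a ∨ σ x = b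
  · cases ht : t x <;> simp [colorDiff, recolorPair, spin, hx, ht, hab, hab.symm]
  · push Not at hx
    simp [colorDiff, recolorPair, hx.1, hx.2]

lemma indicator_recolorPair_eq {a b : α} (hab : a ≠ b) (σ : V → α) (t : V → Bool) (x y : V) :
    (if recolorPair a b σ t x = recolorPair a b σ t y then (1 : ℝ) else 0) =
      (if (σ x = a ∨ σ x = b) ∧ (σ y = a ∨ σ y = b) then (1 + spin (t x) * spin (t y)) / 2
        else 0) + if ¬(σ x = a ∨ σ x = b) ∧ σ x = σ y then 1 else 0 := by
  by_cases hx : σ x = a ∨ σ x = b <;> by_cases hy : σ y = a ∨ σ y = b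
  · cases htx : t x <;> cases hty : t y <;>
      simp [recolorPair, spin, hx, hy, htx, hty, hab, hab.symm]
  all_goals
    simp only [recolorPair, hx, hy]
    split_ifs <;> grind

lemma sum_colorDiff_mul_colorDiff [Fintype α] (s t : α) :
    ∑ a, ∑ b, colorDiff a b s * colorDiff a b t =
      2 * ((Fintype.card α : ℝ) * (if s = t then 1 else 0) - 1) := by
  simp only [colorDiff, sub_mul, mul_sub, sum_sub_distrib]
  by_cases hst : s = t <;> simp [hst, sum_ite_eq] <;> ring

end Recoloring


section PottsModel

variable {V α : Type*} [Fintype V] [DecidableEq α]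

noncomputable def pottsWeight (J : V → V → ℝ) (σ : V → α) : ℝ :=
  Real.exp (∑ x, ∑ y, J x y * if σ x = σ y then 1 else 0)

lemma pottsWeight_recolorPair {a b : α} (hab : a ≠ b) (J : V → V → ℝ) (σ : V → α) :
    ∃ C, 0 < C ∧ ∀ t, pottsWeight J (recolorPair a b σ t) =
      C * Real.exp (∑ x, ∑ y, pairCoupling a b σ J x y * (spin (t x) * spin (t y))) := by
  refine ⟨Real.exp (∑ x, ∑ y, J x y * ((if (σ x = a ∨ σ x = b) ∧ (σ y = a ∨ σ y = b) then 1 / 2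
    else 0) + if ¬(σ x = a ∨ σ x = b) ∧ σ x = σ y then 1 else 0)), Real.exp_pos _, fun t => ?_⟩
  rw [pottsWeight, ← Real.exp_add, ← sum_add_distrib]
  simp_rw [← sum_add_distrib, indicator_recolorPair_eq hab]
  congr 1
  refine sum_congr rfl fun x _ => sum_congr rfl fun y _ => ?_
  unfold pairCoupling
  split_ifs <;> ring

variable [DecidableEq V]

lemma sum_swapColorsOn_eq_sum_recolorPair {M : Type*} [AddCommMonoid M] {a b : α} (hab : a ≠ b)
    (F : (V → α) → M) (σ : V → α) :
    ∑ η, F (swapColorsOn a b η σ) = ∑ t, F (recolorPair a b σ t) := by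
  simp only [swapColorsOn_eq_recolorPair hab]
  exact Equiv.sum_comp _ fun t => F (recolorPair a b σ t)

lemma sign_mul_sum_recolorPair_nonneg {a b : α} (hab : a ≠ b) {J : V → V → ℝ} {g : V → Bool}
    (hJ : ∀ x y, 0 ≤ spin (g x) * spin (g y) * J x y) (σ : V → α) (i j : V) :
    0 ≤ spin (g i) * spin (g j) * ∑ t, pottsWeight J (recolorPair a b σ t) *
      (colorDiff a b (recolorPair a b σ t i) * colorDiff a b (recolorPair a b σ t j)) := by
  obtain ⟨C, hC, hw⟩ := pottsWeight_recolorPair hab J σ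
  simp only [hw, colorDiff_recolorPair hab]
  by_cases hi : σ i = a ∨ σ i = b
  swap
  · simp [hi]
  by_cases hj : σ j = a ∨ σ j = b
  swap
  · simp [hj]
  have hK : ∀ x y, 0 ≤ spin (g x) * spin (g y) * pairCoupling a b σ J x y := fun x y => by
    unfold pairCoupling
    split_ifs
    · linarith [hJ x y]
    · simp
  simp only [hi, hj, if_true, mul_assoc, ← mul_sum]
  linarith [mul_nonneg hC.le (ising_two_point_gauge_nonneg _ g hK i j)]

variable [Fintype α]

lemma sum_sum_swapColorsOn {M : Type*} [AddCommMonoid M] (a b : α) (F : (V → α) → M) :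
    ∑ σ, ∑ η, F (swapColorsOn a b η σ) = Fintype.card (V → Bool) • ∑ σ, F σ := by
  rw [sum_comm, ← card_univ, ← sum_const]
  exact sum_congr rfl fun η _ => Equiv.sum_comp ((swapColorsOn_involutive a b η).toPerm _) F

lemma sign_mul_sum_colorDiff_nonneg {J : V → V → ℝ} {g : V → Bool}
    (hJ : ∀ x y, 0 ≤ spin (g x) * spin (g y) * J x y) (a b : α) (i j : V) :
    0 ≤ spin (g i) * spin (g j) *
      ∑ σ, pottsWeight J σ * (colorDiff a b (σ i) * colorDiff a b (σ j)) := by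
  rcases eq_or_ne a b with rfl | hab
  · simp [colorDiff]
  set F : (V → α) → ℝ := fun σ => pottsWeight J σ * (colorDiff a b (σ i) * colorDiff a b (σ j))
  have hcard : (0 : ℝ) < Fintype.card (V → Bool) := by exact_mod_cast Fintype.card_pos
  refine nonneg_of_mul_nonneg_right ?_ hcard
  rw [mul_left_comm, ← nsmul_eq_mul, ← sum_sum_swapColorsOn a b F, mul_sum]
  refine sum_nonneg fun σ _ => ?_
  rw [sum_swapColorsOn_eq_sum_recolorPair hab]
  exact sign_mul_sum_recolorPair_nonneg hab hJ σ i j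

lemma sign_mul_sum_pottsWeight_two_point_nonneg {J : V → V → ℝ} {g : V → Bool}
    (hJ : ∀ x y, 0 ≤ spin (g x) * spin (g y) * J x y) (i j : V) :
    0 ≤ spin (g i) * spin (g j) *
      ∑ σ : V → α, pottsWeight J σ * ((Fintype.card α : ℝ) * (if σ i = σ j then 1 else 0) - 1) := by
  have h2 : 2 * ∑ σ : V → α, pottsWeight J σ *
        ((Fintype.card α : ℝ) * (if σ i = σ j then 1 else 0) - 1) =
      ∑ a : α, ∑ b : α, ∑ σ : V → α,
        pottsWeight J σ * (colorDiff a b (σ i) * colorDiff a b (σ j)) := by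
    rw [sum_comm_cycle, mul_sum]
    refine sum_congr rfl fun σ _ => ?_
    simp only [← mul_sum, sum_colorDiff_mul_colorDiff]
    ring
  refine nonneg_of_mul_nonneg_right ?_ (two_pos : (0 : ℝ) < 2)
  rw [mul_left_comm, h2, mul_sum]
  refine sum_nonneg fun a _ => ?_
  rw [mul_sum]
  exact sum_nonneg fun b _ => sign_mul_sum_colorDiff_nonneg hJ a b i j

end PottsModel

end Potts

open Potts in
theorem potts_bipartite_antiferro_two_point_sign_general
    {V : Type*} [Fintype V] [DecidableEq V]
    (q : ℕ) (hq : 2 ≤ q) (A : V → Prop) (J : V → V → ℝ)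
    (hsame : ∀ i j, (A i ↔ A j) → 0 ≤ J i j)
    (hopp : ∀ i j, ¬(A i ↔ A j) → J i j ≤ 0)
    (i j : V) :
    ((A i ↔ A j) →
      0 ≤ (∑ σ : V → Fin q,
            Real.exp (∑ x : V, ∑ y : V, J x y * (if σ x = σ y then 1 else 0)) *
              (((q : ℝ) * (if σ i = σ j then 1 else 0) - 1) / ((q : ℝ) - 1)))
          / (∑ σ : V → Fin q,
            Real.exp (∑ x : V, ∑ y : V, J x y * (if σ x = σ y then 1 else 0)))) ∧
    (¬(A i ↔ A j) →
      (∑ σ : V → Fin q,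
            Real.exp (∑ x : V, ∑ y : V, J x y * (if σ x = σ y then 1 else 0)) *
              (((q : ℝ) * (if σ i = σ j then 1 else 0) - 1) / ((q : ℝ) - 1)))
          / (∑ σ : V → Fin q,
            Real.exp (∑ x : V, ∑ y : V, J x y * (if σ x = σ y then 1 else 0))) ≤ 0) := by
  classical
  set g : V → Bool := fun x => decide ¬A x
  have hsign : ∀ x y, spin (g x) * spin (g y) = if (A x ↔ A y) then 1 else -1 := by
    intro x y
    by_cases hx : A x <;> by_cases hy : A y <;> simp [g, spin, hx, hy]
  have hJ : ∀ x y, 0 ≤ spin (g x) * spin (g y) * J x y := by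
    intro x y
    rw [hsign]
    split_ifs with h
    · simpa using hsame x y h
    · simpa using hopp x y h
  have key := sign_mul_sum_pottsWeight_two_point_nonneg (α := Fin q) hJ i j
  rw [Fintype.card_fin, hsign] at key
  have hq1 : (0 : ℝ) ≤ q - 1 := sub_nonneg.mpr (by exact_mod_cast (by omega : 1 ≤ q))
  have hZ : 0 ≤ ∑ σ : V → Fin q, pottsWeight J σ := sum_nonneg fun σ _ => (Real.exp_pos _).le
  have hnum : ∑ σ : V → Fin q, pottsWeight J σ *
        (((q : ℝ) * (if σ i = σ j then 1 else 0) - 1) / ((q : ℝ) - 1)) =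
      (∑ σ : V → Fin q, pottsWeight J σ * ((q : ℝ) * (if σ i = σ j then 1 else 0) - 1)) /
        ((q : ℝ) - 1) := by
    simp only [sum_div, mul_div_assoc]
  simp only [← pottsWeight.eq_1, hnum]
  constructor
  · intro h
    rw [if_pos h, one_mul] at key
    exact div_nonneg (div_nonneg key hq1) hZ
  · intro h
    rw [if_neg h] at key
    exact div_nonpos_of_nonpos_of_nonneg (div_nonpos_of_nonpos_of_nonneg (by linarith) hq1) hZ

/-- Griffiths-type inequality for Potts models on a bipartite site set
`V = A ∪ Aᶜ` with `J_{ij} ≥ 0` within classes and `J_{ij} ≤ 0` between classes: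
the two-point function `G(i,j) = ⟨(q δ_{σ_i,σ_j} − 1)/(q−1)⟩` is `≥ 0` for sites
in the same class and `≤ 0` for sites in opposite classes. -/
theorem potts_bipartite_antiferro_two_point_sign
    {V : Type*} [Fintype V] [DecidableEq V]
    (q : ℕ) (hq : 2 ≤ q) (A : V → Prop) [DecidablePred A] (J : V → V → ℝ)
    (hsymm : ∀ i j, J i j = J j i)
    (hsame : ∀ i j, (A i ↔ A j) → 0 ≤ J i j)
    (hopp : ∀ i j, ¬(A i ↔ A j) → J i j ≤ 0)
    (i j : V) :
    ((A i ↔ A j) →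
      0 ≤ (∑ σ : V → Fin q,
            Real.exp (∑ x : V, ∑ y : V, J x y * (if σ x = σ y then 1 else 0)) *
              (((q : ℝ) * (if σ i = σ j then 1 else 0) - 1) / ((q : ℝ) - 1)))
          / (∑ σ : V → Fin q,
            Real.exp (∑ x : V, ∑ y : V, J x y * (if σ x = σ y then 1 else 0)))) ∧
    (¬(A i ↔ A j) →
      (∑ σ : V → Fin q,
            Real.exp (∑ x : V, ∑ y : V, J x y * (if σ x = σ y then 1 else 0)) *
              (((q : ℝ) * (if σ i = σ j then 1 else 0) - 1) / ((q : ℝ) - 1)))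
          / (∑ σ : V → Fin q,
            Real.exp (∑ x : V, ∑ y : V, J x y * (if σ x = σ y then 1 else 0))) ≤ 0) :=
  potts_bipartite_antiferro_two_point_sign_general q hq A J hsame hopp i j
end

section
/- For an arbitrary q-state Potts model with couplings {J_{ij}} on a finite site set, the two-point correlation satisfies the comparison-to-Ising bound ⟨(q δ_{σ_i,σ_j} − 1)/(q−1)⟩ ≤ (q/2) ⟨ε_i ε_j⟩_{Ising,{|J|/2}}, where the right-hand side is the two-point function of the ferromagnetic Ising model with couplings {(1/2)|J_{ij}|}. -/
/-!
With `g_{ab} = 1_a - 1_b` one has `q δ_{cd} - 1 = ½ ∑_{a,b} g_{ab}(c) g_{ab}(d)`. Fix `a ≠ b` and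
condition the Potts measure on the configuration `ρ` obtained by merging colour `b` into `a`. Given
`ρ`, the choice between `a` and `b` on `A = ρ⁻¹(a)` is an Ising model with couplings `J/2` on
`A × A` and `0` elsewhere, and `g_{ab}(σ_i) g_{ab}(σ_j) = 1_{i,j ∈ A} ε_i ε_j`. Griffiths'
comparison inequality bounds its conditional mean by `⟨ε_i ε_j⟩_{|J|/2}`, so
`⟨g_{ab}(σ_i) g_{ab}(σ_j)⟩ ≤ ⟨ε_i ε_j⟩_{|J|/2} ⟨g_{ab}(σ_i)² g_{ab}(σ_j)²⟩`. Summing over the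
pairs and using `∑_{a,b} g_{ab}(c)² g_{ab}(d)² ≤ 2(q - 1)` gives the bound with constant
`1 ≤ q/2`. The comparison inequality comes from Ginibre's duplicate-variable trick and the first
Griffiths inequality, proved by expanding `exp (K ε_x ε_y) = cosh K + ε_x ε_y sinh K`.
-/

open Finset

/-- Ising spin value attached to a Boolean. -/
def isingSpin (b : Bool) : ℝ := if b then 1 else -1

/-- `E` is minus the Hamiltonian. -/
noncomputable def gibbsMean {Ω : Type*} [Fintype Ω] (E f : Ω → ℝ) : ℝ :=
  (∑ ω, Real.exp (E ω) * f ω) / ∑ ω, Real.exp (E ω)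

section GibbsMean

variable {Ω : Type*} [Fintype Ω] (E : Ω → ℝ)

lemma gibbsMean_const_mul (c : ℝ) (f : Ω → ℝ) :
    gibbsMean E (fun ω => c * f ω) = c * gibbsMean E f := by
  simp only [gibbsMean, mul_left_comm _ c, ← Finset.mul_sum, mul_div_assoc]

lemma gibbsMean_sum {ι : Type*} (s : Finset ι) (f : ι → Ω → ℝ) :
    gibbsMean E (fun ω => ∑ k ∈ s, f k ω) = ∑ k ∈ s, gibbsMean E (f k) := by
  simp only [gibbsMean, Finset.mul_sum, ← Finset.sum_div]
  rw [Finset.sum_comm]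

lemma sum_exp_pos [Nonempty Ω] : 0 < ∑ ω, Real.exp (E ω) :=
  Finset.sum_pos (fun _ _ => Real.exp_pos _) Finset.univ_nonempty

lemma gibbsMean_le_of_forall_le [Nonempty Ω] {f : Ω → ℝ} {c : ℝ} (h : ∀ ω, f ω ≤ c) :
    gibbsMean E f ≤ c := by
  rw [gibbsMean, div_le_iff₀ (sum_exp_pos E), Finset.mul_sum]
  exact Finset.sum_le_sum fun ω _ => by rw [mul_comm]; gcongr; exact h ω

lemma gibbsMean_le_mul_gibbsMean {f g : Ω → ℝ} {c : ℝ}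
    (h : ∑ ω, Real.exp (E ω) * f ω ≤ c * ∑ ω, Real.exp (E ω) * g ω) :
    gibbsMean E f ≤ c * gibbsMean E g := by
  rw [gibbsMean, gibbsMean, ← mul_div_assoc]
  exact div_le_div_of_nonneg_right h (Finset.sum_nonneg fun _ _ => (Real.exp_nonneg _))

end GibbsMean

section Ising

variable {V : Type*} [Fintype V]

def isingEnergy (K : V → V → ℝ) (ε : V → Bool) : ℝ :=
  ∑ x, ∑ y, K x y * isingSpin (ε x) * isingSpin (ε y)

lemma isingSpin_beq (s t : Bool) : isingSpin (s == t) = isingSpin s * isingSpin t := by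
  cases s <;> cases t <;> norm_num [isingSpin]

lemma isingSpin_sq (s : Bool) : isingSpin s ^ 2 = 1 := by
  cases s <;> norm_num [isingSpin]

lemma abs_isingSpin (s : Bool) : |isingSpin s| = 1 := by
  cases s <;> norm_num [isingSpin]

lemma exp_mul_isingSpin (a : ℝ) (s : Bool) :
    Real.exp (a * isingSpin s) = Real.cosh a + Real.sinh a * isingSpin s := by
  cases s
  · simp [isingSpin, ← sub_eq_add_neg, Real.cosh_sub_sinh]
  · simp [isingSpin, Real.cosh_add_sinh]

lemma isingEnergy_add (K K' : V → V → ℝ) (ε : V → Bool) :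
    isingEnergy K ε + isingEnergy K' ε = isingEnergy (K + K') ε := by
  simp only [isingEnergy, ← Finset.sum_add_distrib, Pi.add_apply, add_mul]

lemma isingEnergy_beq (K : V → V → ℝ) (ε τ : V → Bool) :
    isingEnergy K (fun x => ε x == τ x) =
      isingEnergy (fun x y => K x y * isingSpin (τ x) * isingSpin (τ y)) ε := by
  simp only [isingEnergy, isingSpin_beq]
  exact Finset.sum_congr rfl fun x _ => Finset.sum_congr rfl fun y _ => by ring

variable [DecidableEq V]

lemma sum_prod_isingSpin_pow_nonneg (m : V → ℕ) :
    0 ≤ ∑ ε : V → Bool, ∏ x, isingSpin (ε x) ^ m x := by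
  rw [← Fintype.prod_sum fun x (s : Bool) => isingSpin s ^ m x]
  refine Finset.prod_nonneg fun x _ => ?_
  rcases Nat.even_or_odd (m x) with h | h <;> simp [isingSpin, h.neg_one_pow]

lemma prod_isingSpin_pow_add_single (m : V → ℕ) (ε : V → Bool) (y : V) :
    ∏ x, isingSpin (ε x) ^ (m + Pi.single y 1 : V → ℕ) x =
      (∏ x, isingSpin (ε x) ^ m x) * isingSpin (ε y) := by
  simp only [Pi.add_apply, pow_add, Finset.prod_mul_distrib]
  congr 1
  simp [Pi.single_apply, pow_ite]

def NonnegSpinMoments (F : (V → Bool) → ℝ) : Prop :=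
  ∀ m : V → ℕ, 0 ≤ ∑ ε : V → Bool, (∏ x, isingSpin (ε x) ^ m x) * F ε

lemma NonnegSpinMoments.mul_exp {F : (V → Bool) → ℝ} (hF : NonnegSpinMoments F) {a : ℝ}
    (ha : 0 ≤ a) (y z : V) :
    NonnegSpinMoments fun ε => F ε * Real.exp (a * isingSpin (ε y) * isingSpin (ε z)) := by
  intro m
  have expand : ∀ ε : V → Bool,
      (∏ x, isingSpin (ε x) ^ m x) *
          (F ε * Real.exp (a * isingSpin (ε y) * isingSpin (ε z))) =
        Real.cosh a * ((∏ x, isingSpin (ε x) ^ m x) * F ε) +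
          Real.sinh a *
            ((∏ x, isingSpin (ε x) ^ (m + Pi.single y 1 + Pi.single z 1 : V → ℕ) x) * F ε) := by
    intro ε
    rw [mul_assoc, ← isingSpin_beq, exp_mul_isingSpin, isingSpin_beq,
      prod_isingSpin_pow_add_single, prod_isingSpin_pow_add_single]
    ring
  simp only [expand, Finset.sum_add_distrib, ← Finset.mul_sum]
  exact add_nonneg (mul_nonneg (Real.cosh_pos a).le (hF m))
    (mul_nonneg (Real.sinh_nonneg_iff.mpr ha) (hF _))

lemma nonnegSpinMoments_exp_isingEnergy {K : V → V → ℝ} (hK : ∀ x y, 0 ≤ K x y) :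
    NonnegSpinMoments fun ε => Real.exp (isingEnergy K ε) := by
  have hprod : ∀ s : Finset (V × V), NonnegSpinMoments fun ε =>
      ∏ p ∈ s, Real.exp (K p.1 p.2 * isingSpin (ε p.1) * isingSpin (ε p.2)) := by
    intro s
    induction s using Finset.induction_on with
    | empty => simpa [NonnegSpinMoments] using sum_prod_isingSpin_pow_nonneg
    | insert p s hp ih =>
      simp only [Finset.prod_insert hp, mul_comm (Real.exp _)]
      exact ih.mul_exp (hK p.1 p.2) p.1 p.2
  simpa [isingEnergy, Real.exp_sum, ← Fintype.prod_prod_type'] using hprod Finset.univ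

lemma NonnegSpinMoments.sum_mul_isingSpin_mul_nonneg {F : (V → Bool) → ℝ}
    (hF : NonnegSpinMoments F) (i j : V) :
    0 ≤ ∑ ε : V → Bool, F ε * (isingSpin (ε i) * isingSpin (ε j)) := by
  have h := hF (0 + Pi.single i 1 + Pi.single j 1)
  simp only [prod_isingSpin_pow_add_single, Pi.zero_apply, pow_zero,
    Finset.prod_const_one, one_mul] at h
  simpa only [mul_comm (F _)] using h

/-- Ginibre's duplicate-variable identity: substitute `δ = (ε == τ)` in the second copy. -/
lemma sum_exp_isingEnergy_mul_sub_eq (K K' : V → V → ℝ) (i j : V) :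
    (∑ ε : V → Bool, Real.exp (isingEnergy K' ε) * (isingSpin (ε i) * isingSpin (ε j))) *
        (∑ ε : V → Bool, Real.exp (isingEnergy K ε)) -
      (∑ ε : V → Bool, Real.exp (isingEnergy K ε) * (isingSpin (ε i) * isingSpin (ε j))) *
        (∑ ε : V → Bool, Real.exp (isingEnergy K' ε)) =
      ∑ τ : V → Bool, (1 - isingSpin (τ i) * isingSpin (τ j)) * ∑ ε : V → Bool,
        Real.exp (isingEnergy (K' + fun x y => K x y * isingSpin (τ x) * isingSpin (τ y)) ε) *
          (isingSpin (ε i) * isingSpin (ε j)) := by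
  have hflip : ∀ ε : V → Bool, Function.Bijective fun (τ : V → Bool) x => ε x == τ x :=
    fun ε => Function.Involutive.bijective fun τ => funext fun x => by
      show (ε x == (ε x == τ x)) = τ x
      cases ε x <;> cases τ x <;> rfl
  have hdup : ∀ f g : (V → Bool) → ℝ,
      (∑ ε, f ε * (isingSpin (ε i) * isingSpin (ε j))) * (∑ δ, g δ) -
        (∑ δ, g δ * (isingSpin (δ i) * isingSpin (δ j))) * (∑ ε, f ε) =
      ∑ ε, ∑ δ, f ε * g δ *
        (isingSpin (ε i) * isingSpin (ε j) - isingSpin (δ i) * isingSpin (δ j)) := fun f g => by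
    simp only [mul_sub, Finset.sum_sub_distrib, Finset.sum_mul_sum]
    rw [Finset.sum_comm (f := fun ε δ => f ε * g δ * (isingSpin (δ i) * isingSpin (δ j)))]
    congr 1 <;> exact Finset.sum_congr rfl fun _ _ => Finset.sum_congr rfl fun _ _ => by ring
  rw [hdup]
  simp only [Finset.mul_sum]
  conv_rhs => rw [Finset.sum_comm]
  refine Finset.sum_congr rfl fun ε _ => ?_
  rw [← Fintype.sum_bijective _ (hflip ε) _ _ fun _ => rfl]
  refine Finset.sum_congr rfl fun τ _ => ?_
  rw [isingEnergy_beq, ← Real.exp_add, isingEnergy_add, isingSpin_beq, isingSpin_beq]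
  ring

lemma sum_exp_isingEnergy_mul_le {K K' : V → V → ℝ} (hK : ∀ x y, |K x y| ≤ K' x y)
    (i j : V) :
    (∑ ε : V → Bool, Real.exp (isingEnergy K ε) * (isingSpin (ε i) * isingSpin (ε j))) *
        ∑ ε : V → Bool, Real.exp (isingEnergy K' ε) ≤
      (∑ ε : V → Bool, Real.exp (isingEnergy K' ε) * (isingSpin (ε i) * isingSpin (ε j))) *
        ∑ ε : V → Bool, Real.exp (isingEnergy K ε) := by
  rw [← sub_nonneg, sum_exp_isingEnergy_mul_sub_eq]
  refine Finset.sum_nonneg fun τ _ => mul_nonneg ?_ ?_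
  · rw [← isingSpin_beq, sub_nonneg]
    cases τ i == τ j <;> norm_num [isingSpin]
  · refine (nonnegSpinMoments_exp_isingEnergy fun x y => ?_).sum_mul_isingSpin_mul_nonneg i j
    have h := neg_abs_le (K x y * isingSpin (τ x) * isingSpin (τ y))
    simp only [abs_mul, abs_isingSpin, mul_one] at h
    simp only [Pi.add_apply]
    linarith [hK x y]

lemma gibbsMean_isingEnergy_nonneg {K : V → V → ℝ} (hK : ∀ x y, 0 ≤ K x y) (i j : V) :
    0 ≤ gibbsMean (isingEnergy K) fun ε => isingSpin (ε i) * isingSpin (ε j) :=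
  div_nonneg ((nonnegSpinMoments_exp_isingEnergy hK).sum_mul_isingSpin_mul_nonneg i j)
    (Finset.sum_nonneg fun _ _ => Real.exp_nonneg _)

lemma gibbsMean_isingEnergy_le {K K' : V → V → ℝ} (hK : ∀ x y, |K x y| ≤ K' x y)
    (i j : V) :
    gibbsMean (isingEnergy K) (fun ε => isingSpin (ε i) * isingSpin (ε j)) ≤
      gibbsMean (isingEnergy K') fun ε => isingSpin (ε i) * isingSpin (ε j) := by
  rw [gibbsMean, gibbsMean, div_le_div_iff₀ (sum_exp_pos _) (sum_exp_pos _)]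
  exact sum_exp_isingEnergy_mul_le hK i j

end Ising

lemma sum_sum_prod_mul_comp {V α β γ R : Type*} [Fintype V] [DecidableEq V] [Fintype α]
    [Fintype β] [Fintype γ] [DecidableEq γ] [CommSemiring R] (f : α → β → γ) (w : α → R)
    (hw : ∀ s, ∑ c, ∑ t, (if f c t = s then w c else 0) = 1) (G : (V → γ) → R) :
    ∑ ρ : V → α, ∑ ε : V → β, (∏ x, w (ρ x)) * G (fun x => f (ρ x) (ε x)) =
      ∑ σ, G σ := by
  calc ∑ ρ : V → α, ∑ ε : V → β, (∏ x, w (ρ x)) * G (fun x => f (ρ x) (ε x))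
      = ∑ ρ : V → α, ∑ ε : V → β, ∑ σ,
          if (fun x => f (ρ x) (ε x)) = σ then (∏ x, w (ρ x)) * G σ else 0 := by simp
    _ = ∑ ρ : V → α, ∑ σ, ∑ ε : V → β,
          if (fun x => f (ρ x) (ε x)) = σ then (∏ x, w (ρ x)) * G σ else 0 :=
        Finset.sum_congr rfl fun _ _ => Finset.sum_comm
    _ = ∑ σ, ∑ ρ : V → α, ∑ ε : V → β,
          if (fun x => f (ρ x) (ε x)) = σ then (∏ x, w (ρ x)) * G σ else 0 := Finset.sum_comm
    _ = ∑ σ, G σ * ∏ x, ∑ c, ∑ t, (if f c t = σ x then w c else 0) := by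
        simp only [Fintype.prod_sum, Finset.mul_sum, Fintype.prod_ite_zero, funext_iff]
        refine Finset.sum_congr rfl fun σ _ => Finset.sum_congr rfl fun ρ _ =>
          Finset.sum_congr rfl fun ε _ => ?_
        split_ifs <;> simp [mul_comm]
    _ = ∑ σ, G σ := by simp [hw]

section Potts

variable {S : Type*} [DecidableEq S]

def pairSpin (a b c : S) : ℝ := (if c = a then 1 else 0) - (if c = b then 1 else 0)

lemma sum_pairSpin_mul_pairSpin [Fintype S] (c d : S) :
    ∑ p : S × S, pairSpin p.1 p.2 c * pairSpin p.1 p.2 d =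
      2 * (Fintype.card S * (if c = d then 1 else 0) - 1) := by
  simp only [Fintype.sum_prod_type, pairSpin, sub_mul, mul_sub, Finset.sum_sub_distrib, ite_mul,
    one_mul, zero_mul]
  by_cases h : c = d
  · subst h; simp; ring
  · simp [h, Ne.symm h]; ring

lemma sum_pairSpin_sq_mul_sq_le [Fintype S] (c d : S) :
    ∑ p : S × S, pairSpin p.1 p.2 c ^ 2 * pairSpin p.1 p.2 d ^ 2 ≤
      2 * (Fintype.card S - 1) := by
  have hsq : ∀ a b : S, pairSpin a b d ^ 2 ≤ 1 := fun a b => by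
    unfold pairSpin; split_ifs <;> norm_num
  calc ∑ p : S × S, pairSpin p.1 p.2 c ^ 2 * pairSpin p.1 p.2 d ^ 2
      ≤ ∑ p : S × S, pairSpin p.1 p.2 c * pairSpin p.1 p.2 c :=
        Finset.sum_le_sum fun p _ => by
          rw [← sq]; exact mul_le_of_le_one_right (sq_nonneg _) (hsq p.1 p.2)
    _ = 2 * (Fintype.card S - 1) := by simp [sum_pairSpin_mul_pairSpin]

def splitColor (a b c : S) (t : Bool) : S := if c = a then (if t then a else b) else c

/-- Every configuration `σ` is hit with total weight `1` by `(ρ, ε) ↦ splitColor a b ∘ (ρ, ε)`: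
colour `a` in `ρ` is split by the spin, colour `b` never occurs in `ρ`, and any other colour ignores
the spin, whence the `1 / 2`. -/
noncomputable def splitWeight (a b c : S) : ℝ := if c = a then 1 else if c = b then 0 else 1 / 2

variable {a b : S}

lemma pairSpin_splitColor (hab : a ≠ b) {c : S} (hc : c ≠ b) (t : Bool) :
    pairSpin a b (splitColor a b c t) = if c = a then isingSpin t else 0 := by
  unfold pairSpin splitColor
  by_cases hca : c = a
  · cases t <;> simp [hca, hab, Ne.symm hab, isingSpin]
  · simp [hca, hc]

lemma ite_splitColor_eq (hab : a ≠ b) {c d : S} (hc : c ≠ b) (hd : d ≠ b) (t u : Bool) :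
    (if splitColor a b c t = splitColor a b d u then 1 else 0 : ℝ) =
      (if c = d then 1 else 0) +
        if c = a ∧ d = a then (isingSpin t * isingSpin u - 1) / 2 else 0 := by
  unfold splitColor
  by_cases hca : c = a <;> by_cases hda : d = a
  · cases t <;> cases u <;> norm_num [hca, hda, hab, Ne.symm hab, isingSpin]
  · cases t <;> simp [hca, hda, Ne.symm hda, Ne.symm hd]
  · cases u <;> simp [hca, hda, hc]
  · simp [hca, hda]

lemma sum_splitWeight_splitColor_eq [Fintype S] (hab : a ≠ b) (s : S) :
    ∑ c, ∑ t, (if splitColor a b c t = s then splitWeight a b c else 0) = 1 := by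
  simp only [Fintype.sum_bool, splitColor, splitWeight]
  by_cases hsa : s = a
  · subst hsa
    rw [Finset.sum_eq_single s] <;> grind
  by_cases hsb : s = b
  · subst hsb
    rw [Finset.sum_eq_single a] <;> grind
  · rw [Finset.sum_eq_single s] <;> grind

variable {V : Type*} [Fintype V]

def pottsEnergy (J : V → V → ℝ) (σ : V → S) : ℝ :=
  ∑ x, ∑ y, J x y * if σ x = σ y then 1 else 0

lemma exists_pottsEnergy_splitColor (J : V → V → ℝ) (hab : a ≠ b) {ρ : V → S}
    (hρ : ∀ x, ρ x ≠ b) : ∃ C, ∀ ε : V → Bool,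
      pottsEnergy J (fun x => splitColor a b (ρ x) (ε x)) =
        C + isingEnergy (fun x y => if ρ x = a ∧ ρ y = a then J x y / 2 else 0) ε := by
  refine ⟨∑ x, ∑ y,
    if ρ x = a ∧ ρ y = a then J x y / 2 else J x y * if ρ x = ρ y then 1 else 0, fun ε => ?_⟩
  simp only [pottsEnergy, isingEnergy, ← Finset.sum_add_distrib]
  refine Finset.sum_congr rfl fun x _ => Finset.sum_congr rfl fun y _ => ?_
  rw [ite_splitColor_eq hab (hρ x) (hρ y)]
  by_cases h : ρ x = a ∧ ρ y = a
  · simp only [h, and_self, if_true]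
    ring
  · simp [h]

variable [DecidableEq V]

lemma sum_exp_pottsEnergy_splitColor_le {J K : V → V → ℝ}
    (hK : ∀ x y, |J x y| / 2 ≤ K x y) (hab : a ≠ b) {ρ : V → S} (hρ : ∀ x, ρ x ≠ b)
    (i j : V) :
    ∑ ε : V → Bool, Real.exp (pottsEnergy J fun x => splitColor a b (ρ x) (ε x)) *
        (pairSpin a b (splitColor a b (ρ i) (ε i)) *
          pairSpin a b (splitColor a b (ρ j) (ε j))) ≤
      gibbsMean (isingEnergy K) (fun ε => isingSpin (ε i) * isingSpin (ε j)) *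
        ∑ ε : V → Bool, Real.exp (pottsEnergy J fun x => splitColor a b (ρ x) (ε x)) *
          (pairSpin a b (splitColor a b (ρ i) (ε i)) ^ 2 *
            pairSpin a b (splitColor a b (ρ j) (ε j)) ^ 2) := by
  obtain ⟨C, hC⟩ := exists_pottsEnergy_splitColor J hab hρ
  set Kρ : V → V → ℝ := fun x y => if ρ x = a ∧ ρ y = a then J x y / 2 else 0
  have hKρ : ∀ x y, |Kρ x y| ≤ K x y := fun x y => by
    by_cases h : ρ x = a ∧ ρ y = a
    · simpa [Kρ, h, abs_div] using hK x y
    · simpa [Kρ, h] using (div_nonneg (abs_nonneg _) zero_le_two).trans (hK x y)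
  simp only [hC, pairSpin_splitColor hab (hρ _), Real.exp_add]
  by_cases h : ρ i = a ∧ ρ j = a
  · have hcmp := gibbsMean_isingEnergy_le hKρ i j
    rw [gibbsMean, div_le_iff₀ (sum_exp_pos _)] at hcmp
    simp only [h, if_true, isingSpin_sq, mul_one, mul_assoc, ← Finset.mul_sum]
    rw [mul_left_comm]
    exact mul_le_mul_of_nonneg_left hcmp (Real.exp_nonneg _)
  · rcases not_and_or.mp h with h | h <;> simp [h]

lemma gibbsMean_pairSpin_mul_le [Fintype S] {J K : V → V → ℝ}
    (hK : ∀ x y, |J x y| / 2 ≤ K x y) (a b : S) (i j : V) :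
    gibbsMean (pottsEnergy J) (fun σ => pairSpin a b (σ i) * pairSpin a b (σ j)) ≤
      gibbsMean (isingEnergy K) (fun ε => isingSpin (ε i) * isingSpin (ε j)) *
        gibbsMean (pottsEnergy J) fun σ => pairSpin a b (σ i) ^ 2 * pairSpin a b (σ j) ^ 2 := by
  rcases eq_or_ne a b with rfl | hab
  · simp [pairSpin, gibbsMean]
  apply gibbsMean_le_mul_gibbsMean
  conv_lhs => rw [← sum_sum_prod_mul_comp _ _ (sum_splitWeight_splitColor_eq hab)]
  conv_rhs => rw [← sum_sum_prod_mul_comp _ _ (sum_splitWeight_splitColor_eq hab), Finset.mul_sum]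
  refine Finset.sum_le_sum fun ρ _ => ?_
  simp only [← Finset.mul_sum]
  rw [mul_left_comm]
  by_cases hρ : ∀ x, ρ x ≠ b
  · exact mul_le_mul_of_nonneg_left (sum_exp_pottsEnergy_splitColor_le hK hab hρ i j)
      (Finset.prod_nonneg fun x _ => by unfold splitWeight; split_ifs <;> norm_num)
  · obtain ⟨x, hx⟩ := not_forall_not.mp hρ
    have hW : ∏ x, splitWeight a b (ρ x) = 0 :=
      Finset.prod_eq_zero (Finset.mem_univ x) (by simp [splitWeight, hx, hab.symm])
    simp [hW]

theorem gibbsMean_potts_le_gibbsMean_ising [Fintype S] [Nontrivial S] {J K : V → V → ℝ}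
    (hK : ∀ x y, |J x y| / 2 ≤ K x y) (i j : V) :
    gibbsMean (pottsEnergy J) (fun σ : V → S =>
        ((Fintype.card S : ℝ) * (if σ i = σ j then 1 else 0) - 1) /
          ((Fintype.card S : ℝ) - 1)) ≤
      gibbsMean (isingEnergy K) fun ε => isingSpin (ε i) * isingSpin (ε j) := by
  set c := gibbsMean (isingEnergy K) fun ε => isingSpin (ε i) * isingSpin (ε j)
  have hc : 0 ≤ c := gibbsMean_isingEnergy_nonneg
    (fun x y => (div_nonneg (abs_nonneg _) zero_le_two).trans (hK x y)) i j
  have hq : 0 < 2 * ((Fintype.card S : ℝ) - 1) := by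
    have : (1 : ℝ) < Fintype.card S := Nat.one_lt_cast.mpr Fintype.one_lt_card
    linarith
  calc gibbsMean (pottsEnergy J) (fun σ : V → S =>
        ((Fintype.card S : ℝ) * (if σ i = σ j then 1 else 0) - 1) /
          ((Fintype.card S : ℝ) - 1))
      = gibbsMean (pottsEnergy J) (fun σ => (2 * ((Fintype.card S : ℝ) - 1))⁻¹ *
          ∑ p : S × S, pairSpin p.1 p.2 (σ i) * pairSpin p.1 p.2 (σ j)) := by
        congr 1 with σ
        rw [sum_pairSpin_mul_pairSpin]
        field_simp
    _ = (2 * ((Fintype.card S : ℝ) - 1))⁻¹ * ∑ p : S × S,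
          gibbsMean (pottsEnergy J) fun σ => pairSpin p.1 p.2 (σ i) * pairSpin p.1 p.2 (σ j) := by
        rw [gibbsMean_const_mul, gibbsMean_sum]
    _ ≤ (2 * ((Fintype.card S : ℝ) - 1))⁻¹ * ∑ p : S × S, c * gibbsMean (pottsEnergy J)
          (fun σ => pairSpin p.1 p.2 (σ i) ^ 2 * pairSpin p.1 p.2 (σ j) ^ 2) := by
        gcongr with p
        exact gibbsMean_pairSpin_mul_le hK p.1 p.2 i j
    _ = c * ((2 * ((Fintype.card S : ℝ) - 1))⁻¹ * gibbsMean (pottsEnergy J) (fun σ =>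
          ∑ p : S × S, pairSpin p.1 p.2 (σ i) ^ 2 * pairSpin p.1 p.2 (σ j) ^ 2)) := by
        rw [gibbsMean_sum, ← Finset.mul_sum]
        ring
    _ ≤ c * ((2 * ((Fintype.card S : ℝ) - 1))⁻¹ * (2 * ((Fintype.card S : ℝ) - 1))) := by
        gcongr
        exact gibbsMean_le_of_forall_le _ fun σ => sum_pairSpin_sq_mul_sq_le _ _
    _ = c := by rw [inv_mul_cancel₀ hq.ne', mul_one]

end Potts

theorem potts_comparison_to_ising_general
    {V : Type*} [Fintype V] [DecidableEq V]
    (q : ℕ) (hq : 2 ≤ q) (J : V → V → ℝ)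
    (i j : V) :
    (∑ σ : V → Fin q,
        Real.exp (∑ x : V, ∑ y : V, J x y * (if σ x = σ y then 1 else 0)) *
          (((q : ℝ) * (if σ i = σ j then 1 else 0) - 1) / ((q : ℝ) - 1)))
      / (∑ σ : V → Fin q,
        Real.exp (∑ x : V, ∑ y : V, J x y * (if σ x = σ y then 1 else 0)))
    ≤ ((q : ℝ) / 2) *
      ((∑ ε : V → Bool,
          Real.exp (∑ x : V, ∑ y : V, (1 / 2) * |J x y| * isingSpin (ε x) * isingSpin (ε y)) *
            (isingSpin (ε i) * isingSpin (ε j)))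
        / (∑ ε : V → Bool,
          Real.exp (∑ x : V, ∑ y : V, (1 / 2) * |J x y| * isingSpin (ε x) * isingSpin (ε y)))) := by
  have : Nontrivial (Fin q) := Fin.nontrivial_iff_two_le.mpr hq
  have hK : ∀ x y, |J x y| / 2 ≤ 1 / 2 * |J x y| := fun x y => by rw [div_eq_inv_mul, one_div]
  have hmean := gibbsMean_potts_le_gibbsMean_ising (S := Fin q) hK i j
  simp only [Fintype.card_fin] at hmean
  have hc := gibbsMean_isingEnergy_nonneg (K := fun x y => 1 / 2 * |J x y|)
    (fun x y => by positivity) i j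
  have hq2 : (1 : ℝ) ≤ q / 2 := by rw [le_div_iff₀ two_pos]; exact_mod_cast hq
  exact hmean.trans (le_mul_of_one_le_left hc hq2)

/-- comparison-to-Ising bound for an arbitrary Potts model:
`⟨(q δ_{σ_i,σ_j} − 1)/(q−1)⟩_{Potts,J} ≤ (q/2) ⟨ε_i ε_j⟩_{Ising,|J|/2}`. -/
theorem potts_comparison_to_ising
    {V : Type*} [Fintype V] [DecidableEq V]
    (q : ℕ) (hq : 2 ≤ q) (J : V → V → ℝ) (hsymm : ∀ i j, J i j = J j i)
    (i j : V) :
    (∑ σ : V → Fin q,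
        Real.exp (∑ x : V, ∑ y : V, J x y * (if σ x = σ y then 1 else 0)) *
          (((q : ℝ) * (if σ i = σ j then 1 else 0) - 1) / ((q : ℝ) - 1)))
      / (∑ σ : V → Fin q,
        Real.exp (∑ x : V, ∑ y : V, J x y * (if σ x = σ y then 1 else 0)))
    ≤ ((q : ℝ) / 2) *
      ((∑ ε : V → Bool,
          Real.exp (∑ x : V, ∑ y : V, (1 / 2) * |J x y| * isingSpin (ε x) * isingSpin (ε y)) *
            (isingSpin (ε i) * isingSpin (ε j)))
        / (∑ ε : V → Bool,
          Real.exp (∑ x : V, ∑ y : V, (1 / 2) * |J x y| * isingSpin (ε x) * isingSpin (ε y)))) :=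
  potts_comparison_to_ising_general q hq J i j
end

section
/- The Wang–Swendsen–Kotecký algorithm at zero temperature is ergodic on every bipartite finite graph: for any integer q ≥ 2 and any finite bipartite graph G, any proper q-coloring of G can be transformed into any other proper q-coloring of G by a finite sequence of WSK moves. -/
/-- `c` is a proper `q`-coloring of `G` with colors in `{1,…,q}`. -/
def ProperColoring {V : Type*} (G : SimpleGraph V) (q : ℕ) (c : V → ℕ) : Prop :=
  (∀ x, c x ∈ Finset.Icc 1 q) ∧ ∀ u v, G.Adj u v → c u ≠ c v

/-- A zero-temperature WSK move with color pair `(i,j)`: choose a set `S` which is a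
union of connected components of the subgraph induced by the vertices colored `i` or
`j` (formalized as: `S` consists of such vertices and is closed under adjacency within
them), and interchange the colors `i` and `j` on `S`. -/
def WSKPairMove {V : Type*} [DecidableEq V] (G : SimpleGraph V) (i j : ℕ) (c c' : V → ℕ) : Prop :=
  ∃ S : Finset V,
    (∀ x ∈ S, c x = i ∨ c x = j) ∧
    (∀ x ∈ S, ∀ y, G.Adj x y → (c y = i ∨ c y = j) → y ∈ S) ∧
    ∀ x, c' x = if x ∈ S then (if c x = i then j else if c x = j then i else c x) else c x

/-- A zero-temperature WSK move: a `WSKPairMove` for some pair of distinct colors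
`i, j ∈ {1,…,q}`. -/
def WSKMove {V : Type*} [DecidableEq V] (G : SimpleGraph V) (q : ℕ) (c c' : V → ℕ) : Prop :=
  ∃ i ∈ Finset.Icc 1 q, ∃ j ∈ Finset.Icc 1 q, i ≠ j ∧ WSKPairMove G i j c c'

/-!
Let `c₀` be the proper 2-coloring of `G` by the colors `1, 2` given by the bipartition, and let
`c` be any proper `q`-coloring. One `(1,2)`-move flips exactly those `{1,2}`-components of `c`
that disagree with `c₀`, after which every vertex colored `1` or `2` has its `c₀`-color. Now
any vertex `v` with `c v ≠ c₀ v` has a color outside `{1,2}`, and no neighbour of `v` has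
color `c v` or `c₀ v` (a neighbour colored `c₀ v ∈ {1,2}` would have `c₀`-color `c₀ v`).
So `{v}` is a whole component for the colors `c v, c₀ v` and can be recolored to `c₀ v` on
its own. This keeps the invariant and lowers the number of disagreements, so `c` reaches `c₀`.
Moves are invertible, hence any two proper colorings are connected through `c₀`.
-/

open Finset Function Relation

section Moves

variable {V : Type*} [DecidableEq V] {G : SimpleGraph V} {q i j : ℕ} {c c' : V → ℕ}

namespace WSKPairMove

lemma symm (h : WSKPairMove G i j c c') : WSKPairMove G i j c' c := by
  obtain ⟨S, hS, hclosed, hc'⟩ := h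
  simp only [← Equiv.swap_apply_def] at hc'
  refine ⟨S, fun x hx => ?_, fun x hx y hxy hy => ?_, fun x => ?_⟩
  · rw [hc' x, if_pos hx]
    rcases hS x hx with h | h <;> simp [h]
  · by_contra hyS
    rw [hc' y, if_neg hyS] at hy
    exact hyS (hclosed x hx y hxy hy)
  · rw [← Equiv.swap_apply_def, hc' x]
    split_ifs <;> simp

lemma adj_ne (h : WSKPairMove G i j c c') (hc : ∀ u v, G.Adj u v → c u ≠ c v) :
    ∀ u v, G.Adj u v → c' u ≠ c' v := by
  obtain ⟨S, hS, hclosed, hc'⟩ := h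
  simp only [← Equiv.swap_apply_def] at hc'
  -- A vertex outside `S` next to `S` has a color other than `i, j`, which no swapped vertex has.
  have boundary : ∀ u v, G.Adj u v → u ∈ S → v ∉ S → c' u ≠ c' v := by
    intro u v huv hu hv
    have hcv : c v ≠ i ∧ c v ≠ j := by
      constructor <;> intro h <;> exact hv (hclosed u hu v huv (by omega))
    rw [hc' u, hc' v, if_pos hu, if_neg hv]
    rcases hS u hu with h | h <;> simp [h] <;> omega
  intro u v huv
  by_cases hu : u ∈ S <;> by_cases hv : v ∈ S
  · rw [hc' u, hc' v, if_pos hu, if_pos hv]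
    exact (Equiv.swap i j).injective.ne (hc u v huv)
  · exact boundary u v huv hu hv
  · exact (boundary v u huv.symm hv hu).symm
  · rw [hc' u, hc' v, if_neg hu, if_neg hv]
    exact hc u v huv

lemma mem_Icc (h : WSKPairMove G i j c c') (hi : i ∈ Icc 1 q) (hj : j ∈ Icc 1 q)
    (hc : ∀ x, c x ∈ Icc 1 q) (x : V) : c' x ∈ Icc 1 q := by
  obtain ⟨S, -, -, hc'⟩ := h
  rw [hc' x]
  split_ifs <;> first | assumption | exact hc x

end WSKPairMove

lemma WSKMove.symm (h : WSKMove G q c c') : WSKMove G q c' c := by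
  obtain ⟨i, hi, j, hj, hij, hmove⟩ := h
  exact ⟨i, hi, j, hj, hij, hmove.symm⟩

instance : Std.Symm (WSKMove G q) := ⟨fun _ _ => WSKMove.symm⟩

lemma ProperColoring.of_wskMove (hc : ProperColoring G q c) (h : WSKMove G q c c') :
    ProperColoring G q c' := by
  obtain ⟨i, hi, j, hj, -, hmove⟩ := h
  exact ⟨hmove.mem_Icc hi hj hc.1, hmove.adj_ne hc.2⟩

lemma wskPairMove_update {v : V} {a : ℕ} (hnbr : ∀ y, G.Adj v y → c y ≠ c v ∧ c y ≠ a) :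
    WSKPairMove G (c v) a c (update c v a) := by
  refine ⟨{v}, fun x hx => ?_, fun x hx y hxy hy => ?_, fun x => ?_⟩
  · simp_all
  · rw [mem_singleton] at hx
    subst hx
    have := hnbr y hxy
    omega
  · rcases eq_or_ne x v with rfl | hx <;> simp [*]

end Moves

lemma ProperColoring.eq_one_or_eq_two {V : Type*} {G : SimpleGraph V} {c : V → ℕ}
    (hc : ProperColoring G 2 c) (x : V) : c x = 1 ∨ c x = 2 := by
  have := Finset.mem_Icc.1 (hc.1 x)
  omega

section Bipartite

variable {V : Type*} [Fintype V] [DecidableEq V] {G : SimpleGraph V} {q : ℕ} {c c₀ : V → ℕ}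

lemma wskPairMove_one_two_toBipartition (hc₀ : ProperColoring G 2 c₀)
    (hc : ∀ u v, G.Adj u v → c u ≠ c v) :
    WSKPairMove G 1 2 c (fun x => if c x = 1 ∨ c x = 2 then c₀ x else c x) := by
  refine ⟨({x | (c x = 1 ∨ c x = 2) ∧ c x ≠ c₀ x} : Finset V), fun x hx => ?_,
    fun x hx y hxy hy => ?_, fun x => ?_⟩
  · exact (mem_filter.1 hx).2.1
  · simp only [mem_filter, mem_univ, true_and] at hx ⊢
    have := hc x y hxy
    have := hc₀.2 x y hxy
    have := hc₀.eq_one_or_eq_two x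
    have := hc₀.eq_one_or_eq_two y
    omega
  · have := hc₀.eq_one_or_eq_two x
    by_cases h12 : c x = 1 ∨ c x = 2 <;> simp only [mem_filter, mem_univ, true_and] <;>
      split_ifs <;> omega

lemma reflTransGen_wskMove_of_agree (hq : 2 ≤ q) (hc₀ : ProperColoring G 2 c₀)
    (hc : ProperColoring G q c) (hagree : ∀ x, (c x = 1 ∨ c x = 2) → c x = c₀ x) :
    ReflTransGen (WSKMove G q) c c₀ := by
  induction hn : #{x | c x ≠ c₀ x} generalizing c with
  | zero =>
    rw [card_eq_zero, filter_eq_empty_iff] at hn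
    obtain rfl : c = c₀ := funext fun x => not_not.1 (hn (mem_univ x))
    exact .refl
  | succ n ih =>
    obtain ⟨v, hv⟩ := card_pos.1 (by rw [hn]; exact n.succ_pos)
    have hcv : c v ≠ c₀ v := (mem_filter.1 hv).2
    have hc₀v := hc₀.eq_one_or_eq_two v
    have hnbr : ∀ y, G.Adj v y → c y ≠ c v ∧ c y ≠ c₀ v := fun y hvy =>
      ⟨(hc.2 v y hvy).symm, fun hy => hc₀.2 v y hvy (hy ▸ hagree y (by omega))⟩
    have hmove : WSKMove G q c (update c v (c₀ v)) :=
      ⟨c v, hc.1 v, c₀ v, Finset.mem_Icc.2 (by omega), hcv, wskPairMove_update hnbr⟩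
    refine .head hmove (ih (hc.of_wskMove hmove) (fun x hx => ?_) ?_)
    · rcases eq_or_ne x v with rfl | hxv
      · simp
      · simpa [hxv] using hagree x (by simpa [hxv] using hx)
    · have : ({x | update c v (c₀ v) x ≠ c₀ x} : Finset V) =
          ({x | c x ≠ c₀ x} : Finset V).erase v := by
        ext x
        rcases eq_or_ne x v with rfl | hxv <;> simp [*]
      rw [this, card_erase_of_mem hv, hn, Nat.add_sub_cancel]

lemma reflTransGen_wskMove_toBipartition (hq : 2 ≤ q) (hc₀ : ProperColoring G 2 c₀)
    (hc : ProperColoring G q c) : ReflTransGen (WSKMove G q) c c₀ := by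
  have hmove : WSKMove G q c (fun x => if c x = 1 ∨ c x = 2 then c₀ x else c x) :=
    ⟨1, Finset.mem_Icc.2 (by omega), 2, Finset.mem_Icc.2 (by omega), by omega,
      wskPairMove_one_two_toBipartition hc₀ hc.2⟩
  refine .head hmove (reflTransGen_wskMove_of_agree hq hc₀ (hc.of_wskMove hmove) fun x hx => ?_)
  by_cases h12 : c x = 1 ∨ c x = 2 <;> simp_all

end Bipartite

/-- the Wang–Swendsen–Kotecký algorithm at zero temperature is ergodic
on every finite bipartite graph: for `q ≥ 2`, any proper `q`-coloring can be
transformed into any other by a finite sequence of WSK moves. -/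
theorem wsk_ergodic_on_bipartite
    {V : Type*} [Fintype V] [DecidableEq V] (G : SimpleGraph V) (hbip : G.Colorable 2)
    (q : ℕ) (hq : 2 ≤ q) (σ σ' : V → ℕ)
    (hσ : ProperColoring G q σ) (hσ' : ProperColoring G q σ') :
    Relation.ReflTransGen (WSKMove G q) σ σ' := by
  obtain ⟨C⟩ := hbip
  have hc₀ : ProperColoring G 2 fun x => (C x : ℕ) + 1 :=
    ⟨fun x => Finset.mem_Icc.2 ⟨by simp, by simp [(C x).isLt]⟩,
      fun u v huv => by simpa [Fin.val_inj] using C.valid huv⟩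
  exact (reflTransGen_wskMove_toBipartition hq hc₀ hσ).trans
    (symm (reflTransGen_wskMove_toBipartition hq hc₀ hσ'))
end

section
/- Step 2 of the ergodicity proof: Suppose G = (V,E) is bipartite with classes A, B, q ≥ 3, and the current proper coloring c satisfies: c_x = q for x ∈ A with target color σ_x = q, c_x = 1 for all other x ∈ A, and c_x = 2 for all x ∈ B. Then every vertex x ∈ B with σ_x = q is a singleton component of the subgraph induced by vertices colored 2 or q (all its neighbors have target color ≠ q, hence are currently colored 1), so one WSK move with color pair (2,q) recolors exactly these vertices to q while leaving all others unchanged. -/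
/-- Step 2 of the WSK ergodicity proof: for the current coloring
`c` (equal to `q` on vertices of `A` with target color `q`, to 1 on the rest of
`A`, and to 2 on `B`), every `x ∈ B` with target color `σ_x = q` has all its
neighbors currently colored 1 (so it is a singleton component of the subgraph
induced by the colors `{2,q}`), and one WSK move with color pair `(2,q)`
recolors exactly these vertices to `q` while leaving all others unchanged. -/
theorem wsk_step2
    {V : Type*} [Fintype V] [DecidableEq V] (G : SimpleGraph V)
    (A : V → Prop) [DecidablePred A]
    (hbipart : ∀ u v, G.Adj u v → (A u ↔ ¬ A v))
    (q : ℕ) (hq : 3 ≤ q) (σ : V → ℕ) (hσ : ProperColoring G q σ) :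
    (∀ x, ¬ A x → σ x = q → ∀ y, G.Adj x y →
      (if A y then (if σ y = q then q else 1) else 2) = 1) ∧
    WSKPairMove G 2 q
      (fun x => if A x then (if σ x = q then q else 1) else 2)
      (fun x => if A x then (if σ x = q then q else 1)
                else (if σ x = q then q else 2)) := by
  have hAy : ∀ x, ¬ A x → ∀ y, G.Adj x y → A y := by
    intro x hx y hxy
    by_contra hy
    exact hx ((hbipart x y hxy).mpr hy)
  constructor
  · intro x hx hσx y hxy
    have hy : A y := hAy x hx y hxy
    have hσy : σ y ≠ q := fun h => hσ.2 x y hxy (by rw [hσx, h])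
    simp [hy, hσy]
  · refine ⟨Finset.univ.filter (fun x => ¬ A x ∧ σ x = q), ?_, ?_, ?_⟩
    · intro x hx
      simp only [Finset.mem_filter] at hx
      left; simp [hx.2.1]
    · intro x hx y hxy hcy
      simp only [Finset.mem_filter] at hx
      have hy : A y := hAy x hx.2.1 y hxy
      have hσy : σ y ≠ q := fun h => hσ.2 x y hxy (by rw [hx.2.2, h])
      exfalso
      rcases hcy with h | h <;> simp [hy, hσy] at h
      omega
    · intro x
      by_cases hx : A x
      · simp [hx]
      · by_cases hσx : σ x = q
        · simp [hx, hσx]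
        · simp [hx, hσx]
end

section
/- Inductive reduction for WSK ergodicity: Let q ≥ 3 and let G be bipartite. If two proper q-colorings σ, σ' of G agree on the set S = {x : σ_x = q} (i.e. σ'_x = q exactly when σ_x = q), and if the WSK algorithm for (q−1)-colorings is ergodic on the subgraph of G induced by V ∖ S, then σ can be transformed into σ' by WSK moves using only color pairs from {1,…,q−1}. -/
open Function

section

variable {V : Type*} {s : Set V}

lemma extend_subtype_val_apply_of_notMem {α : Type*} (c : s → α) (d : V → α) {x : V}
    (hx : x ∉ s) : extend Subtype.val c d x = d x :=
  extend_apply' _ _ _ fun ⟨a, ha⟩ => hx (ha ▸ a.2)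

lemma extend_subtype_val_restrict {α : Type*} {f d : V → α} (hfd : ∀ x ∉ s, d x = f x) :
    extend Subtype.val (s.domRestrict f) d = f := by
  funext x
  by_cases hx : x ∈ s
  · exact Subtype.val_injective.extend_apply _ _ ⟨x, hx⟩
  · rw [extend_subtype_val_apply_of_notMem _ _ hx, hfd x hx]

lemma ProperColoring.restrict {G : SimpleGraph V} {q : ℕ} {c : V → ℕ}
    (hc : ProperColoring G q c) (hs : ∀ x ∈ s, c x ≠ q) :
    ProperColoring (G.induce s) (q - 1) (s.domRestrict c) := by
  refine ⟨fun x => ?_, fun u v huv => hc.2 u v huv⟩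
  have hx := Finset.mem_Icc.mp (hc.1 x)
  have hxq := hs x x.2
  rw [Set.domRestrict_apply, Finset.mem_Icc]
  omega

variable [DecidableEq V] {G : SimpleGraph V}

lemma WSKPairMove.extend_subtype_val {i j : ℕ} {c c' : s → ℕ} {d : V → ℕ}
    (hd : ∀ x ∉ s, d x ≠ i ∧ d x ≠ j) (h : WSKPairMove (G.induce s) i j c c') :
    WSKPairMove G i j (extend Subtype.val c d) (extend Subtype.val c' d) := by
  obtain ⟨S, hS_colors, hS_closed, hc'⟩ := h
  have hext (g : s → ℕ) (a : s) : extend Subtype.val g d a = g a :=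
    Subtype.val_injective.extend_apply g d a
  have hmem : ∀ a : s, (a : V) ∈ S.map (Embedding.subtype _) ↔ a ∈ S := by simp
  refine ⟨S.map (Embedding.subtype _), ?_, ?_, fun x => ?_⟩
  · simp only [Finset.mem_map, Embedding.subtype_apply]
    rintro _ ⟨a, ha, rfl⟩
    rw [hext]
    exact hS_colors a ha
  · simp only [Finset.mem_map, Embedding.subtype_apply]
    rintro _ ⟨a, ha, rfl⟩ y hay hy
    have hys : y ∈ s := by
      by_contra hys
      rw [extend_subtype_val_apply_of_notMem _ _ hys] at hy
      exact hy.elim (hd y hys).1 (hd y hys).2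
    lift y to s using hys
    rw [hext] at hy
    exact ⟨y, hS_closed a ha _ hay hy, rfl⟩
  · by_cases hx : x ∈ s
    · lift x to s using hx
      rw [hext, hext, hc']
      simp only [hmem]
    · have hxS : x ∉ S.map (Embedding.subtype _) := by simp [hx]
      rw [if_neg hxS, extend_subtype_val_apply_of_notMem _ _ hx,
        extend_subtype_val_apply_of_notMem _ _ hx]

lemma WSKMove.extend_subtype_val {q : ℕ} {c c' : s → ℕ} {d : V → ℕ}
    (hd : ∀ x ∉ s, q < d x) (h : WSKMove (G.induce s) q c c') :
    WSKMove G q (extend Subtype.val c d) (extend Subtype.val c' d) := by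
  obtain ⟨i, hi, j, hj, hij, hmove⟩ := h
  have hiq := (Finset.mem_Icc.mp hi).2
  have hjq := (Finset.mem_Icc.mp hj).2
  exact ⟨i, hi, j, hj, hij, hmove.extend_subtype_val fun x hx =>
    ⟨(hiq.trans_lt (hd x hx)).ne', (hjq.trans_lt (hd x hx)).ne'⟩⟩

end

theorem wsk_inductive_reduction_general
    {V : Type*} [DecidableEq V] (G : SimpleGraph V)
    (q : ℕ) (σ σ' : V → ℕ)
    (hσ : ProperColoring G q σ) (hσ' : ProperColoring G q σ')
    (hagree : ∀ x, σ x = q ↔ σ' x = q)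
    (hind : ∀ c c' : {x : V // σ x ≠ q} → ℕ,
      ProperColoring (SimpleGraph.induce {x : V | σ x ≠ q} G) (q - 1) c →
      ProperColoring (SimpleGraph.induce {x : V | σ x ≠ q} G) (q - 1) c' →
      Relation.ReflTransGen
        (WSKMove (SimpleGraph.induce {x : V | σ x ≠ q} G) (q - 1)) c c') :
    Relation.ReflTransGen (WSKMove G (q - 1)) σ σ' := by
  set s : Set V := {x | σ x ≠ q}
  have hoff : ∀ x ∉ s, σ x = q := fun x hx => not_not.mp hx
  have hpath := hind _ _ (hσ.restrict fun x hx => hx)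
    (hσ'.restrict fun x hx => (hagree x).not.mp hx)
  have hlift : Relation.ReflTransGen (WSKMove G (q - 1))
      (extend Subtype.val (s.domRestrict σ) σ) (extend Subtype.val (s.domRestrict σ') σ) :=
    hpath.lift _ fun c c' => WSKMove.extend_subtype_val fun x hx => by
      -- `q - 1 < q` needs `q ≠ 0`, which the color `σ x = q ∈ {1,…,q}` provides
      have := (Finset.mem_Icc.mp (hσ.1 x)).1
      rw [hoff x hx] at this ⊢
      omega
  rwa [extend_subtype_val_restrict fun _ _ => rfl,
    extend_subtype_val_restrict fun x hx => (hoff x hx).trans ((hagree x).mp (hoff x hx)).symm]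
    at hlift

/-- inductive reduction for WSK ergodicity: let `q ≥ 3` and `G`
bipartite. If two proper `q`-colorings `σ, σ'` agree on the set `S = {x : σ_x = q}`
(i.e. `σ'_x = q` exactly when `σ_x = q`), and the WSK algorithm for `(q−1)`-colorings
is ergodic on the subgraph induced by `V ∖ S`, then `σ` can be transformed into `σ'`
by WSK moves using only color pairs from `{1,…,q−1}`. -/
theorem wsk_inductive_reduction
    {V : Type*} [Fintype V] [DecidableEq V] (G : SimpleGraph V)
    (hbip : G.Colorable 2)
    (q : ℕ) (hq : 3 ≤ q) (σ σ' : V → ℕ)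
    (hσ : ProperColoring G q σ) (hσ' : ProperColoring G q σ')
    (hagree : ∀ x, σ x = q ↔ σ' x = q)
    (hind : ∀ c c' : {x : V // σ x ≠ q} → ℕ,
      ProperColoring (SimpleGraph.induce {x : V | σ x ≠ q} G) (q - 1) c →
      ProperColoring (SimpleGraph.induce {x : V | σ x ≠ q} G) (q - 1) c' →
      Relation.ReflTransGen
        (WSKMove (SimpleGraph.induce {x : V | σ x ≠ q} G) (q - 1)) c c') :
    Relation.ReflTransGen (WSKMove G (q - 1)) σ σ' :=
  wsk_inductive_reduction_general G q σ σ' hσ hσ' hagree hind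
end
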